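/- arXiv:1002.3754 — 5 statements merged into one kernel-verified Lean document; each statement's English description precedes it below -/
import Mathlib

section
/- The quartic form G(x,y,z) = x^4 + y^4 + z^4 - (x^2 y^2 + x^2 z^2 + y^2 z^2) - xyz(x+y+z) over Q_2 has only the trivial zero, i.e., if G(x,y,z) = 0 with x, y, z in Q_2 then x = y = z = 0. -/
/-!
A zero of the quartic form `G` can be rescaled so that its coordinate of largest norm is `1` and
the others are `2`-adic integers. Reducing modulo `2` then gives a nontrivial zero of `G` over
`𝔽₂`, and a check of the eight points of `𝔽₂³` shows there is none.
-/

def terjanianG {R : Type*} [CommRing R] (x y z : R) : R :=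
  x ^ 4 + y ^ 4 + z ^ 4 - (x ^ 2 * y ^ 2 + x ^ 2 * z ^ 2 + y ^ 2 * z ^ 2)
    - x * y * z * (x + y + z)

section CommRing

variable {R S : Type*} [CommRing R] [CommRing S]

theorem terjanianG_rotate (x y z : R) : terjanianG x y z = terjanianG y z x := by
  unfold terjanianG; ring

theorem terjanianG_mul (t x y z : R) :
    terjanianG (t * x) (t * y) (t * z) = t ^ 4 * terjanianG x y z := by
  unfold terjanianG; ring

theorem map_terjanianG (f : R →+* S) (x y z : R) :
    f (terjanianG x y z) = terjanianG (f x) (f y) (f z) := by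
  simp only [terjanianG, map_sub, map_add, map_mul, map_pow]

end CommRing

theorem eq_zero_of_terjanianG_eq_zero_zmod_two :
    ∀ x y z : ZMod 2, terjanianG x y z = 0 → x = 0 ∧ y = 0 ∧ z = 0 := by
  unfold terjanianG; decide

theorem PadicInt.terjanianG_one_ne_zero (b c : ℤ_[2]) : terjanianG 1 b c ≠ 0 := fun h => by
  have h₂ := congrArg PadicInt.toZMod h
  rw [map_terjanianG, map_one, map_zero] at h₂
  exact one_ne_zero (eq_zero_of_terjanianG_eq_zero_zmod_two _ _ _ h₂).1

theorem Padic.eq_zero_of_terjanianG_eq_zero_of_norm_le {x y z : ℚ_[2]}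
    (h : terjanianG x y z = 0) (hy : ‖y‖ ≤ ‖x‖) (hz : ‖z‖ ≤ ‖x‖) : x = 0 ∧ y = 0 ∧ z = 0 := by
  suffices hx : x = 0 by
    subst hx
    exact ⟨rfl, norm_le_zero_iff.mp (by simpa using hy), norm_le_zero_iff.mp (by simpa using hz)⟩
  by_contra hx
  have hx₀ : 0 < ‖x‖ := norm_pos_iff.mpr hx
  obtain ⟨b, hb⟩ : ∃ b : ℤ_[2], (b : ℚ_[2]) = x⁻¹ * y :=
    ⟨⟨x⁻¹ * y, by rw [norm_mul, norm_inv]; exact inv_mul_le_one_of_le₀ hy hx₀.le⟩, rfl⟩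
  obtain ⟨c, hc⟩ : ∃ c : ℤ_[2], (c : ℚ_[2]) = x⁻¹ * z :=
    ⟨⟨x⁻¹ * z, by rw [norm_mul, norm_inv]; exact inv_mul_le_one_of_le₀ hz hx₀.le⟩, rfl⟩
  apply PadicInt.terjanianG_one_ne_zero b c
  have hG : terjanianG (x⁻¹ * x) (x⁻¹ * y) (x⁻¹ * z) = 0 := by
    rw [terjanianG_mul, h, mul_zero]
  rw [inv_mul_cancel₀ hx, ← hb, ← hc] at hG
  apply PadicInt.coe_eq_zero.mp
  unfold terjanianG at hG ⊢
  push_cast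
  exact hG

theorem le_total_three {α : Type*} [LinearOrder α] (a b c : α) :
    (b ≤ a ∧ c ≤ a) ∨ (c ≤ b ∧ a ≤ b) ∨ (a ≤ c ∧ b ≤ c) := by
  rcases le_total b a with _ | _ <;> rcases le_total c a with _ | _ <;>
    rcases le_total c b with _ | _ <;> grind

/-- Terjanian's quartic `G(x,y,z)` has only the trivial zero over `ℚ_[2]`. -/
theorem terjanian_G_only_trivial_zero (x y z : ℚ_[2])
    (h : x ^ 4 + y ^ 4 + z ^ 4 - (x ^ 2 * y ^ 2 + x ^ 2 * z ^ 2 + y ^ 2 * z ^ 2)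
        - x * y * z * (x + y + z) = 0) :
    x = 0 ∧ y = 0 ∧ z = 0 := by
  have hG : terjanianG x y z = 0 := h
  rcases le_total_three ‖x‖ ‖y‖ ‖z‖ with ⟨hy, hz⟩ | ⟨hz, hx⟩ | ⟨hx, hy⟩
  · exact Padic.eq_zero_of_terjanianG_eq_zero_of_norm_le hG hy hz
  · rw [terjanianG_rotate] at hG
    obtain ⟨hy₀, hz₀, hx₀⟩ := Padic.eq_zero_of_terjanianG_eq_zero_of_norm_le hG hz hx
    exact ⟨hx₀, hy₀, hz₀⟩
  · rw [terjanianG_rotate, terjanianG_rotate] at hG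
    obtain ⟨hz₀, hx₀, hy₀⟩ := Padic.eq_zero_of_terjanianG_eq_zero_of_norm_le hG hx hy
    exact ⟨hx₀, hy₀, hz₀⟩
end

section
/- For any prime p and any degree d ≥ 1, there exists a form of degree d over Q_p in exactly d^2 variables having only the trivial zero. -/
/-!
Lift to `ℤ_[p]` the matrices `B₁, …, B_d` of multiplication by a basis of `𝔽_{p^d}` over `𝔽_p`.
Then `N(x) = det (∑ xₖ Bₖ)` reduces mod `p` to the norm form of `𝔽_{p^d}/𝔽_p`, which is
anisotropic; scaling `x` to be primitive gives `‖N(x)‖ = ‖x‖^d`, an integral power of `p^d`.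
In `F = ∑_{j<d} p^j N(x_j)`, on `d` blocks `x_j` of `d` variables each, the nonzero terms thus
have norms `p^(dm - j)` with pairwise distinct exponents, so by the ultrametric inequality they
cannot cancel.
-/

open MvPolynomial

section Pencil

variable {R ι n : Type*} [CommRing R] [Fintype ι] [Fintype n] [DecidableEq n]

def Matrix.IsAnisotropicPencil (A : ι → Matrix n n R) : Prop :=
  ∀ y : ι → R, y ≠ 0 → (∑ k, y k • A k).det ≠ 0

noncomputable def pencilDet (B : ι → Matrix n n R) : MvPolynomial ι R :=
  (∑ k, (X k : MvPolynomial ι R) • (B k).map C).det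

theorem eval_pencilDet (B : ι → Matrix n n R) (x : ι → R) :
    eval x (pencilDet B) = (∑ k, x k • B k).det := by
  rw [pencilDet, RingHom.map_det, RingHom.mapMatrix_apply]
  congr 1
  ext i j
  simp [Matrix.sum_apply]

theorem isHomogeneous_pencilDet (B : ι → Matrix n n R) :
    (pencilDet B).IsHomogeneous (Fintype.card n) := by
  have hentry : ∀ i j, ((∑ k, (X k : MvPolynomial ι R) • (B k).map C) i j).IsHomogeneous 1 :=
    fun i j => by
      rw [Matrix.sum_apply]
      refine IsHomogeneous.sum _ _ _ fun k _ => ?_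
      show (X k * C (B k i j)).IsHomogeneous 1
      rw [mul_comm]
      exact isHomogeneous_C_mul_X (B k i j) k
  rw [pencilDet, Matrix.det_apply']
  refine IsHomogeneous.sum _ _ _ fun σ _ => ?_
  have hsign : ((Equiv.Perm.sign σ : ℤ) : MvPolynomial ι R).IsHomogeneous 0 := by
    rw [← map_intCast (C : R →+* MvPolynomial ι R)]
    exact isHomogeneous_C _ _
  convert hsign.mul (IsHomogeneous.prod _ _ (fun _ => 1) fun i _ => hentry (σ i) i)
  simp

end Pencil

theorem Matrix.map_sum_smul {R S ι m n : Type*} [CommRing R] [CommRing S] [Fintype ι]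
    (f : R →+* S) (z : ι → R) (B : ι → Matrix m n R) :
    (∑ k, z k • B k).map f = ∑ k, f (z k) • (B k).map f := by
  ext i j
  simp [Matrix.sum_apply]

theorem Module.Basis.isAnisotropicPencil_leftMulMatrix {K L ι : Type*} [Field K] [Field L]
    [Algebra K L] [Fintype ι] [DecidableEq ι] (b : Module.Basis ι K L) :
    Matrix.IsAnisotropicPencil fun k => Algebra.leftMulMatrix b (b k) := by
  intro y hy
  have hsum : ∑ k, y k • b k ≠ 0 := by
    rwa [Ne, ← b.equivFun_symm_apply, LinearEquiv.map_eq_zero_iff]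
  simp_rw [← map_smul, ← map_sum]
  exact ((Matrix.isUnit_iff_isUnit_det _).mp ((isUnit_iff_ne_zero.mpr hsum).map _)).ne_zero

theorem exists_isAnisotropicPencil_zmod (p : ℕ) [Fact p.Prime] {d : ℕ} (hd : d ≠ 0) :
    ∃ A : Fin d → Matrix (Fin d) (Fin d) (ZMod p), Matrix.IsAnisotropicPencil A :=
  let b := (Module.finBasis (ZMod p) (GaloisField p d)).reindex
    (finCongr (GaloisField.finrank p hd))
  ⟨_, b.isAnisotropicPencil_leftMulMatrix⟩

theorem exists_norm_pi_eq_norm_apply {ι E : Type*} [Fintype ι] [Nonempty ι]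
    [SeminormedAddGroup E] (x : ι → E) : ∃ i, ‖x‖ = ‖x i‖ := by
  obtain ⟨i, -, hi⟩ := Finset.exists_mem_eq_sup Finset.univ Finset.univ_nonempty (‖x ·‖₊)
  exact ⟨i, by rw [Pi.norm_def, hi, coe_nnnorm]⟩

theorem IsUltrametricDist.eq_zero_of_sum_eq_zero_of_norm_ne {E ι : Type*}
    [NormedAddCommGroup E] [IsUltrametricDist E] [Fintype ι] {t : ι → E}
    (ht : ∀ i j, t i ≠ 0 → i ≠ j → ‖t i‖ ≠ ‖t j‖) (hsum : ∑ i, t i = 0) (i : ι) : t i = 0 := by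
  classical
  by_contra hi
  let s := Finset.univ.filter (t · ≠ 0)
  have his : i ∈ s := Finset.mem_filter.mpr ⟨Finset.mem_univ i, hi⟩
  have hs : ‖∑ j ∈ s, t j‖ = s.sup' ⟨i, his⟩ (‖t ·‖) :=
    norm_sum_eq_sup'_of_pairwise_ne ⟨i, his⟩ fun a ha b _ hab =>
      ht a b (Finset.mem_filter.mp ha).2 hab
  rw [Finset.sum_filter_ne_zero, hsum, norm_zero] at hs
  exact hi (norm_le_zero_iff.mp (hs ▸ Finset.le_sup' (‖t ·‖) his))

theorem Fin.eq_of_mul_sub_eq_mul_sub {d : ℕ} {i j : Fin d} {a b : ℤ}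
    (h : d * a - i = d * b - j) : i = j := by
  have hdvd : (d : ℤ) ∣ (j : ℤ) - i := ⟨b - a, by linarith⟩
  have := Int.eq_zero_of_abs_lt_dvd hdvd (by rw [abs_sub_lt_iff]; omega)
  omega

section Padic

variable {p : ℕ} [Fact p.Prime]

theorem PadicInt.norm_eq_one_of_toZMod_ne_zero {z : ℤ_[p]} (hz : toZMod z ≠ 0) : ‖z‖ = 1 := by
  rw [← isUnit_iff, ← IsLocalRing.notMem_maximalIdeal, ← ker_toZMod]
  exact hz

theorem Padic.exists_norm_pi_eq_zpow {ι : Type*} [Fintype ι] {x : ι → ℚ_[p]} (hx : x ≠ 0) :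
    ∃ m : ℤ, ‖x‖ = (p : ℝ) ^ m := by
  obtain ⟨i, hi⟩ := Function.ne_iff.mp hx
  have : Nonempty ι := ⟨i⟩
  obtain ⟨i0, hi0⟩ := exists_norm_pi_eq_norm_apply x
  have hxi0 : x i0 ≠ 0 := by
    rw [← norm_ne_zero_iff, ← hi0, norm_ne_zero_iff]
    exact hx
  exact ⟨-(x i0).valuation, by rw [hi0, Padic.norm_eq_zpow_neg_valuation hxi0]⟩

theorem PadicInt.norm_det_sum_smul_eq_one {ι n : Type*} [Fintype ι] [Fintype n] [DecidableEq n]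
    {B : ι → Matrix n n ℤ_[p]} (hB : Matrix.IsAnisotropicPencil fun k => (B k).map toZMod)
    {z : ι → ℤ_[p]} (hz : toZMod ∘ z ≠ 0) : ‖(∑ k, z k • B k).det‖ = 1 := by
  refine norm_eq_one_of_toZMod_ne_zero ?_
  rw [RingHom.map_det, RingHom.mapMatrix_apply, Matrix.map_sum_smul]
  exact hB _ hz

theorem Padic.norm_det_sum_smul_eq_norm_pow {ι n : Type*} [Fintype ι] [Fintype n]
    [DecidableEq n] {B : ι → Matrix n n ℤ_[p]}
    (hB : Matrix.IsAnisotropicPencil fun k => (B k).map PadicInt.toZMod) (x : ι → ℚ_[p]) :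
    ‖(∑ k, x k • (B k).map PadicInt.Coe.ringHom).det‖ = ‖x‖ ^ Fintype.card n := by
  rcases eq_or_ne x 0 with rfl | hx
  · have hzero : (0 : Matrix n n ℚ_[p]) = (0 : ℚ_[p]) • 1 := (zero_smul _ _).symm
    simp only [Pi.zero_apply, zero_smul, Finset.sum_const_zero]
    rw [hzero, Matrix.det_smul, Matrix.det_one, mul_one, norm_pow, norm_zero, norm_zero]
  have : Nonempty ι := ⟨(Function.ne_iff.mp hx).choose⟩
  -- Dividing `x` by a coordinate of maximal norm makes it integral and primitive.
  obtain ⟨i0, hi0⟩ := exists_norm_pi_eq_norm_apply x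
  set c := x i0
  have hc : c ≠ 0 := by
    rw [← norm_ne_zero_iff, ← hi0, norm_ne_zero_iff]
    exact hx
  let z : ι → ℤ_[p] := fun k => ⟨c⁻¹ * x k, by
    rw [norm_mul, norm_inv, inv_mul_le_one₀ (norm_pos_iff.mpr hc), ← hi0]
    exact norm_le_pi_norm x k⟩
  have hxz : ∀ k, x k = c * z k := fun k => (mul_inv_cancel_left₀ hc (x k)).symm
  have hz : PadicInt.toZMod ∘ z ≠ 0 := by
    have hz0 : z i0 = 1 := Subtype.ext (inv_mul_cancel₀ hc)
    exact Function.ne_iff.mpr ⟨i0, by simp [hz0]⟩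
  have hdet : (∑ k, x k • (B k).map PadicInt.Coe.ringHom).det
      = c ^ Fintype.card n * PadicInt.Coe.ringHom (∑ k, z k • B k).det := by
    rw [RingHom.map_det, RingHom.mapMatrix_apply, Matrix.map_sum_smul, ← Matrix.det_smul,
      Finset.smul_sum]
    simp_rw [hxz, smul_smul]
    rfl
  have hunit : ‖PadicInt.Coe.ringHom (∑ k, z k • B k).det‖ = 1 :=
    PadicInt.norm_det_sum_smul_eq_one hB hz
  rw [hdet, norm_mul, norm_pow, ← hi0, hunit, mul_one]

theorem Padic.eq_zero_of_sum_p_pow_mul_eq_zero {d : ℕ} {y : Fin d → ℚ_[p]}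
    (hy : ∀ j, y j ≠ 0 → ∃ m : ℤ, ‖y j‖ = (p : ℝ) ^ (d * m))
    (hsum : ∑ j : Fin d, (p : ℚ_[p]) ^ (j : ℕ) * y j = 0) (j : Fin d) : y j = 0 := by
  have hp : (p : ℚ_[p]) ≠ 0 := Nat.cast_ne_zero.mpr (Fact.out : p.Prime).ne_zero
  have hp_one : (1 : ℝ) < p := Nat.one_lt_cast.mpr (Fact.out : p.Prime).one_lt
  have hnorm : ∀ j, y j ≠ 0 →
      ∃ m : ℤ, ‖(p : ℚ_[p]) ^ (j : ℕ) * y j‖ = (p : ℝ) ^ (d * m - j) := by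
    intro j hj
    obtain ⟨m, hm⟩ := hy j hj
    refine ⟨m, ?_⟩
    rw [norm_mul, Padic.norm_p_pow, hm, ← zpow_add₀ (by positivity), neg_add_eq_sub]
  refine (mul_eq_zero.mp
    (IsUltrametricDist.eq_zero_of_sum_eq_zero_of_norm_ne ?_ hsum j)).resolve_left (pow_ne_zero _ hp)
  intro i k hi hik heq
  have hk : (p : ℚ_[p]) ^ (k : ℕ) * y k ≠ 0 :=
    norm_ne_zero_iff.mp (heq ▸ norm_ne_zero_iff.mpr hi)
  obtain ⟨a, ha⟩ := hnorm i (right_ne_zero_of_mul hi)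
  obtain ⟨b, hb⟩ := hnorm k (right_ne_zero_of_mul hk)
  rw [ha, hb] at heq
  exact hik (Fin.eq_of_mul_sub_eq_mul_sub (zpow_right_injective₀ (by positivity) hp_one.ne' heq))

end Padic

theorem Padic.exists_isHomogeneous_norm_eval_eq_norm_pow (p : ℕ) [Fact p.Prime] {d : ℕ}
    (hd : d ≠ 0) : ∃ N : MvPolynomial (Fin d) ℚ_[p], N.IsHomogeneous d ∧
      ∀ x : Fin d → ℚ_[p], ‖eval x N‖ = ‖x‖ ^ d := by
  obtain ⟨A, hA⟩ := exists_isAnisotropicPencil_zmod p hd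
  have hlift := ZMod.ringHom_surjective (PadicInt.toZMod (p := p))
  let B : Fin d → Matrix (Fin d) (Fin d) ℤ_[p] := fun k => (A k).map (Function.surjInv hlift)
  have hBA : (fun k => (B k).map PadicInt.toZMod) = A := by
    ext; simp [B, Function.surjInv_eq hlift]
  refine ⟨pencilDet fun k => (B k).map PadicInt.Coe.ringHom, ?_, fun x => ?_⟩
  · simpa only [Fintype.card_fin] using
      isHomogeneous_pencilDet fun k => (B k).map PadicInt.Coe.ringHom
  · rw [eval_pencilDet, Padic.norm_det_sum_smul_eq_norm_pow (hBA ▸ hA), Fintype.card_fin]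

/-- For every prime `p` and degree `d ≥ 1` there is a form of degree `d`
in exactly `d^2` variables over `ℚ_[p]` with only the trivial zero. -/
theorem exists_anisotropic_form_in_d_sq_vars
    (p : ℕ) [Fact p.Prime] (d : ℕ) (hd : 1 ≤ d) :
    ∃ F : MvPolynomial (Fin (d ^ 2)) ℚ_[p], F.IsHomogeneous d ∧
      ∀ x : Fin (d ^ 2) → ℚ_[p], MvPolynomial.eval x F = 0 → x = 0 := by
  obtain ⟨N, hN_hom, hN⟩ := Padic.exists_isHomogeneous_norm_eval_eq_norm_pow p (d := d) (by omega)
  have hN_eq_zero : ∀ x, eval x N = 0 → x = 0 := fun x hx => by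
    rwa [← norm_eq_zero, hN, pow_eq_zero_iff (by omega), norm_eq_zero] at hx
  let e : Fin d × Fin d ≃ Fin (d ^ 2) := finProdFinEquiv.trans (finCongr (sq d).symm)
  refine ⟨∑ j : Fin d, C ((p : ℚ_[p]) ^ (j : ℕ)) * rename (fun i => e (j, i)) N,
    IsHomogeneous.sum _ _ _ fun j _ => hN_hom.rename_isHomogeneous.C_mul _, fun x hx => ?_⟩
  have hblock : ∀ j, x ∘ (fun i => e (j, i)) = 0 := by
    refine fun j => hN_eq_zero _ (Padic.eq_zero_of_sum_p_pow_mul_eq_zero (fun k hk => ?_)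
      (by simpa [eval_rename] using hx) j)
    have hxk : x ∘ (fun i => e (k, i)) ≠ 0 := fun h => hk (by
      rw [h, ← norm_eq_zero, hN, norm_zero, zero_pow (by omega)])
    obtain ⟨m, hm⟩ := Padic.exists_norm_pi_eq_zpow hxk
    exact ⟨m, by rw [hN, hm, ← zpow_natCast, ← zpow_mul, mul_comm]⟩
  funext a
  obtain ⟨⟨j, i⟩, rfl⟩ := e.surjective a
  exact congrFun (hblock j) i
end

section
/- Let F be a field of characteristic different from 2, and let Q be a quadratic form over F. If Q has a non-trivial zero over some finite field extension of F of odd degree, then Q has a non-trivial zero over F. (Springer's theorem) -/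
/-!
Springer's descent. By induction on intermediate fields it suffices to treat a simple extension
`F[X]/(p)` with `p` irreducible of odd degree. Suppose `Q` is anisotropic over `F` but has a
nontrivial zero over `F[X]/(p)`. Lift it to coprime polynomials `f i` of degree `< deg p`; then `p ∣ Q(f)`,
and anisotropy forces `deg Q(f) = 2 max (deg f i) < 2 deg p`. Hence `Q(f) = p w` with `deg w` odd
and `< deg p`, and an odd-degree irreducible factor `h` of `w` gives a nontrivial zero over
`F[X]/(h)`: an infinite descent on `deg p`.
-/

open Polynomial

namespace Polynomial

theorem coeff_prod_pow_of_natDegree_le {R ι : Type*} [CommSemiring R] (s : Finset ι)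
    (f : ι → R[X]) (d : ι → ℕ) {m : ℕ} (h : ∀ i ∈ s, (f i).natDegree ≤ m) :
    (∏ i ∈ s, f i ^ d i).coeff ((∑ i ∈ s, d i) * m) = ∏ i ∈ s, (f i).coeff m ^ d i := by
  classical
  induction s using Finset.induction_on with
  | empty => simp
  | insert a s ha ih =>
    have hs : ∀ i ∈ s, (f i).natDegree ≤ m := fun i hi => h i (Finset.mem_insert_of_mem hi)
    have ha' := h a (Finset.mem_insert_self a s)
    have hprod : (∏ i ∈ s, f i ^ d i).natDegree ≤ (∑ i ∈ s, d i) * m := by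
      rw [Finset.sum_mul]
      exact (natDegree_prod_le _ _).trans
        (Finset.sum_le_sum fun i hi => natDegree_pow_le_of_le _ (hs i hi))
    rw [Finset.prod_insert ha, Finset.sum_insert ha, Finset.prod_insert ha, add_mul,
      coeff_mul_add_eq_of_natDegree_le (natDegree_pow_le_of_le _ ha') hprod,
      coeff_pow_of_natDegree_le ha', ih hs]

theorem exists_ne_zero_forall_natDegree_le {ι R : Type*} [Finite ι] [Semiring R]
    {f : ι → R[X]} (hf : f ≠ 0) : ∃ i₀, f i₀ ≠ 0 ∧ ∀ i, (f i).natDegree ≤ (f i₀).natDegree := by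
  obtain ⟨j, hj⟩ := Function.ne_iff.mp hf
  have : Nonempty ι := ⟨j⟩
  obtain ⟨i₀, hi₀⟩ := Finite.exists_max fun i => (f i).degree
  refine ⟨i₀, fun h => hj ?_, fun i => natDegree_le_natDegree (hi₀ i)⟩
  simpa [h] using hi₀ j

theorem exists_irreducible_odd_natDegree_dvd {K : Type*} [Field K] (w : K[X])
    (hw : Odd w.natDegree) : ∃ h : K[X], Irreducible h ∧ Odd h.natDegree ∧ h ∣ w := by
  induction w using UniqueFactorizationMonoid.induction_on_prime with
  | h₁ => simp at hw
  | h₂ u hu => simp [natDegree_eq_zero_of_isUnit hu] at hw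
  | h₃ a q ha hq ih =>
    rw [natDegree_mul hq.ne_zero ha, Nat.odd_add'] at hw
    by_cases hq_odd : Odd q.natDegree
    · exact ⟨q, hq.irreducible, hq_odd, dvd_mul_right q a⟩
    · obtain ⟨h, hh, hh_odd, hh_dvd⟩ := ih (hw.mpr (Nat.not_odd_iff_even.mp hq_odd))
      exact ⟨h, hh, hh_odd, hh_dvd.mul_left q⟩

end Polynomial

theorem AdjoinRoot.exists_natDegree_lt_mk_eq {F : Type*} [Field F] {p : F[X]}
    (hp : p.natDegree ≠ 0) (y : AdjoinRoot p) :
    ∃ f : F[X], f.natDegree < p.natDegree ∧ mk p f = y := by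
  obtain ⟨g, rfl⟩ := mk_surjective y
  refine ⟨g % p, natDegree_mod_lt g hp, mk_eq_mk.mpr ⟨-(g / p), ?_⟩⟩
  rw [EuclideanDomain.mod_eq_sub_mul_div]
  ring

namespace MvPolynomial

section Homogeneous

variable {σ R : Type*} [CommSemiring R] {φ : MvPolynomial σ R} {n : ℕ}

theorem IsHomogeneous.aeval_mul {A : Type*} [CommSemiring A] [Algebra R A]
    (hφ : φ.IsHomogeneous n) (c : A) (x : σ → A) :
    MvPolynomial.aeval (fun i => c * x i) φ = c ^ n * MvPolynomial.aeval x φ := by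
  simp only [aeval_def, eval₂_eq, Finset.mul_sum]
  refine Finset.sum_congr rfl fun d hd => ?_
  rw [mul_left_comm]
  simp only [mul_pow, Finset.prod_mul_distrib, Finset.prod_pow_eq_pow_sum,
    ← hφ.degree_eq_sum_deg_support hd]

theorem IsHomogeneous.natDegree_aeval_le (hφ : φ.IsHomogeneous n) {f : σ → R[X]} {m : ℕ}
    (hf : ∀ i, (f i).natDegree ≤ m) : (MvPolynomial.aeval f φ).natDegree ≤ n * m := by
  simp only [aeval_def, eval₂_eq]
  refine natDegree_sum_le_of_forall_le _ _ fun d hd => ?_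
  refine (natDegree_C_mul_le _ _).trans ((natDegree_prod_le _ _).trans ?_)
  rw [hφ.degree_eq_sum_deg_support hd, Finset.sum_mul]
  exact Finset.sum_le_sum fun i _ => natDegree_pow_le_of_le _ (hf i)

theorem IsHomogeneous.coeff_aeval (hφ : φ.IsHomogeneous n) {f : σ → R[X]} {m : ℕ}
    (hf : ∀ i, (f i).natDegree ≤ m) :
    (MvPolynomial.aeval f φ).coeff (n * m) = eval (fun i => (f i).coeff m) φ := by
  simp only [aeval_def, eval₂_eq, eval_eq, finsetSum_coeff, Polynomial.algebraMap_eq,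
    Polynomial.coeff_C_mul]
  refine Finset.sum_congr rfl fun d hd => ?_
  rw [hφ.degree_eq_sum_deg_support hd, coeff_prod_pow_of_natDegree_le _ _ _ fun i _ => hf i]

end Homogeneous

section NontrivialZero

variable {ι F : Type*} [CommRing F]

def HasNontrivialZero (A : Type*) [CommRing A] [Algebra F A] (Q : MvPolynomial ι F) : Prop :=
  ∃ x : ι → A, x ≠ 0 ∧ aeval x Q = 0

variable {Q : MvPolynomial ι F} {A B : Type*} [CommRing A] [Algebra F A] [CommRing B]
  [Algebra F B]

theorem hasNontrivialZero_iff_exists_eval_map :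
    HasNontrivialZero A Q ↔ ∃ x : ι → A, x ≠ 0 ∧ eval x (Q.map (algebraMap F A)) = 0 := by
  simp only [HasNontrivialZero, eval_map, aeval_def]

theorem hasNontrivialZero_map_algebraMap_iff {K : Type*} [CommRing K] [Algebra F K]
    [Algebra K A] [IsScalarTower F K A] :
    HasNontrivialZero A (Q.map (algebraMap F K)) ↔ HasNontrivialZero A Q := by
  simp only [HasNontrivialZero, aeval_map_algebraMap]

theorem HasNontrivialZero.map (φ : A →ₐ[F] B) (hφ : Function.Injective φ)
    (hQ : HasNontrivialZero A Q) : HasNontrivialZero B Q := by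
  obtain ⟨x, hx, hzero⟩ := hQ
  refine ⟨fun i => φ (x i), fun h => hx (_root_.funext fun i => hφ ?_), ?_⟩
  · simpa using congrFun h i
  · rw [← comp_aeval_apply, hzero, map_zero]

end NontrivialZero

section Descent

variable {ι F : Type*} [Field F] {Q : MvPolynomial ι F}

theorem natDegree_aeval_of_not_hasNontrivialZero {k : ℕ} (hQ : Q.IsHomogeneous k)
    (hA : ¬ HasNontrivialZero F Q) {f : ι → F[X]} {i₀ : ι} (hi₀ : f i₀ ≠ 0)
    (hmax : ∀ i, (f i).natDegree ≤ (f i₀).natDegree) :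
    aeval f Q ≠ 0 ∧ (aeval f Q).natDegree = k * (f i₀).natDegree := by
  have hcoeff : (aeval f Q).coeff (k * (f i₀).natDegree) ≠ 0 := by
    rw [hQ.coeff_aeval hmax]
    refine fun h => hA ⟨_, fun h0 => hi₀ ?_, h⟩
    exact leadingCoeff_eq_zero.mp (congrFun h0 i₀)
  exact ⟨fun h => hcoeff (by rw [h, Polynomial.coeff_zero]),
    natDegree_eq_of_le_of_coeff_ne_zero (hQ.natDegree_aeval_le hmax) hcoeff⟩

theorem HasNontrivialZero.adjoinRoot_of_dvd {h : F[X]} (hh : ¬ IsUnit h) {f : ι → F[X]}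
    (hf : ∀ g, (∀ i, g ∣ f i) → IsUnit g) (hdvd : h ∣ aeval f Q) :
    HasNontrivialZero (AdjoinRoot h) Q := by
  refine ⟨fun i => AdjoinRoot.mkₐ h (f i), fun h0 => hh (hf h fun i => ?_), ?_⟩
  · exact AdjoinRoot.mk_eq_zero.mp (congrFun h0 i)
  · rw [← comp_aeval_apply]
    exact AdjoinRoot.mk_eq_zero.mpr hdvd

variable [Fintype ι]

theorem HasNontrivialZero.exists_primitive_lift {k : ℕ} (hQ : Q.IsHomogeneous k) {p : F[X]}
    (hp : Irreducible p) (hzero : HasNontrivialZero (AdjoinRoot p) Q) :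
    ∃ f : ι → F[X], (∀ g, (∀ i, g ∣ f i) → IsUnit g) ∧
      (∀ i, (f i).natDegree < p.natDegree) ∧ p ∣ aeval f Q := by
  classical
  obtain ⟨y, hy, hyzero⟩ := hzero
  choose f₀ hf₀deg hf₀ using
    fun i => AdjoinRoot.exists_natDegree_lt_mk_eq hp.natDegree_pos.ne' (y i)
  obtain ⟨i₀, hi₀⟩ := Function.ne_iff.mp hy
  have hf₀i₀ : f₀ i₀ ≠ 0 := fun h => hi₀ (by rw [← hf₀ i₀, h, map_zero]; rfl)
  obtain ⟨f, hf₀f, hgcd⟩ := Finset.extract_gcd f₀ ⟨i₀, Finset.mem_univ _⟩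
  set g := Finset.univ.gcd f₀
  have hg : g ≠ 0 := fun h => hf₀i₀ (Finset.gcd_eq_zero_iff.mp h i₀ (Finset.mem_univ _))
  have hp_not_dvd_g : ¬ p ∣ g := fun h => (hf₀deg i₀).not_ge <| (natDegree_le_of_dvd h hg).trans
    (natDegree_le_of_dvd (Finset.gcd_dvd (Finset.mem_univ _)) hf₀i₀)
  have hp_dvd : p ∣ g ^ k * aeval f Q := by
    have hf₀_eq : (fun i => g * f i) = f₀ :=
      _root_.funext fun i => (hf₀f i (Finset.mem_univ _)).symm
    rw [← hQ.aeval_mul, hf₀_eq, ← AdjoinRoot.mk_eq_zero]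
    change AdjoinRoot.mkₐ p (aeval f₀ Q) = 0
    rw [comp_aeval_apply]
    convert hyzero
    exact hf₀ _
  refine ⟨f, fun h hh => ?_, fun i => ?_, ?_⟩
  · exact isUnit_of_dvd_one (hgcd ▸ Finset.dvd_gcd fun i _ => hh i)
  · by_cases hfi : f i = 0
    · simpa [hfi] using hp.natDegree_pos
    · refine lt_of_le_of_lt ?_ (hf₀deg i)
      rw [hf₀f i (Finset.mem_univ _), natDegree_mul hg hfi]
      exact Nat.le_add_left _ _
  · exact (hp.prime.dvd_or_dvd hp_dvd).resolve_left
      fun h => hp_not_dvd_g (hp.prime.dvd_of_dvd_pow h)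

theorem not_hasNontrivialZero_adjoinRoot (hQ : Q.IsHomogeneous 2)
    (hA : ¬ HasNontrivialZero F Q) {p : F[X]} (hp : Irreducible p) (hodd : Odd p.natDegree) :
    ¬ HasNontrivialZero (AdjoinRoot p) Q := by
  induction hN : p.natDegree using Nat.strong_induction_on generalizing p with
  | _ N ih =>
  intro hzero
  obtain ⟨f, hprim, hdeg, w, hw⟩ := hzero.exists_primitive_lift hQ hp
  obtain ⟨i₀, hfi₀, hmax⟩ := exists_ne_zero_forall_natDegree_le (f := f)
    fun h => not_isUnit_zero (hprim 0 fun i => by simp [h])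
  obtain ⟨hne, hdegQ⟩ := natDegree_aeval_of_not_hasNontrivialZero hQ hA hfi₀ hmax
  rw [hw] at hne hdegQ
  rw [natDegree_mul hp.ne_zero (right_ne_zero_of_mul hne)] at hdegQ
  have hdeg_i₀ := hdeg i₀
  -- `deg p + deg w = 2 deg (f i₀) < 2 deg p`
  have hw_odd : Odd w.natDegree := by
    rw [Nat.odd_iff] at hodd ⊢
    omega
  obtain ⟨h, hh, hh_odd, hh_dvd⟩ := exists_irreducible_odd_natDegree_dvd w hw_odd
  refine ih h.natDegree ?_ hh hh_odd rfl
    (HasNontrivialZero.adjoinRoot_of_dvd hh.not_isUnit hprim ?_)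
  · have := natDegree_le_of_dvd hh_dvd (right_ne_zero_of_mul hne)
    omega
  · rw [hw]
    exact hh_dvd.mul_left p

open IntermediateField Module

theorem HasNontrivialZero.of_adjoin_simple {E : Type*} [Field E] [Algebra F E]
    (hQ : Q.IsHomogeneous 2) {x : E} (hx : IsIntegral F x) (hodd : Odd (finrank F F⟮x⟯))
    (hzero : HasNontrivialZero F⟮x⟯ Q) : HasNontrivialZero F Q := by
  by_contra hA
  refine not_hasNontrivialZero_adjoinRoot hQ hA (minpoly.irreducible hx)
    (by rwa [← adjoin.finrank hx]) ?_
  exact hzero.map (adjoinRootEquivAdjoin F hx).symm.toAlgHom (AlgEquiv.injective _)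

theorem HasNontrivialZero.of_odd_finrank {E : Type*} [Field E] [Algebra F E]
    [FiniteDimensional F E] (hQ : Q.IsHomogeneous 2) (hodd : Odd (finrank F E))
    (hzero : HasNontrivialZero E Q) : HasNontrivialZero F Q := by
  suffices ∀ K : IntermediateField F E, HasNontrivialZero K Q → HasNontrivialZero F Q from
    this ⊤ (hzero.map topEquiv.symm.toAlgHom (AlgEquiv.injective _))
  refine induction_on_adjoin _ (fun h => h.map (botEquiv F E).toAlgHom (AlgEquiv.injective _))
    fun K x ih hKx => ih ?_
  have hKx' : HasNontrivialZero K⟮x⟯ (Q.map (algebraMap F K)) := by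
    rw [hasNontrivialZero_map_algebraMap_iff]
    exact hKx
  refine hasNontrivialZero_map_algebraMap_iff.mp
    (hKx'.of_adjoin_simple (hQ.map _) (IsIntegral.of_finite K x) ?_)
  rw [← finrank_mul_finrank F K E, ← finrank_mul_finrank K K⟮x⟯ E] at hodd
  exact (Nat.odd_mul.mp (Nat.odd_mul.mp hodd).2).1

end Descent

end MvPolynomial

theorem springer_odd_degree_general
    (F : Type*) [Field F]
    (E : Type*) [Field E] [Algebra F E] [FiniteDimensional F E]
    (hodd : Odd (Module.finrank F E))
    (n : ℕ) (Q : MvPolynomial (Fin n) F) (hQ : Q.IsHomogeneous 2)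
    (hzero : ∃ x : Fin n → E, x ≠ 0 ∧
      MvPolynomial.eval x (MvPolynomial.map (algebraMap F E) Q) = 0) :
    ∃ x : Fin n → F, x ≠ 0 ∧ MvPolynomial.eval x Q = 0 :=
  MvPolynomial.HasNontrivialZero.of_odd_finrank hQ hodd
    (MvPolynomial.hasNontrivialZero_iff_exists_eval_map.mpr hzero)

/-- Springer's theorem: a quadratic form over a field of characteristic ≠ 2
which has a non-trivial zero over an odd-degree extension has one over the
base field. -/
theorem springer_odd_degree
    (F : Type*) [Field F] (hchar : ringChar F ≠ 2)
    (E : Type*) [Field E] [Algebra F E] [FiniteDimensional F E]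
    (hodd : Odd (Module.finrank F E))
    (n : ℕ) (Q : MvPolynomial (Fin n) F) (hQ : Q.IsHomogeneous 2)
    (hzero : ∃ x : Fin n → E, x ≠ 0 ∧
      MvPolynomial.eval x (MvPolynomial.map (algebraMap F E) Q) = 0) :
    ∃ x : Fin n → F, x ≠ 0 ∧ MvPolynomial.eval x Q = 0 :=
  springer_odd_degree_general F E hodd n Q hQ hzero
end

section
/- Let F be a field of characteristic zero, and let C be a cubic form over F. If C has a non-trivial zero over some quadratic extension of F, then C has a non-trivial zero over F. -/
/-!
Write the zero as `z = x + θ • y` with `x y : Fin n → F` and `θ ∈ E \ F`. Unless `y` is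
itself a zero of `C`, the restriction `t ↦ C (x + t • y)` is a cubic over `F` vanishing at `θ`,
hence divisible by the quadratic minimal polynomial of `θ`; the linear cofactor has a root
`t ∈ F`. Finally `x + t • y ≠ 0`, for otherwise `z` would be an `E`-multiple of `y` and
`C y = 0`.
-/

open Polynomial

lemma Finsupp.prod_map_toMultiset {σ M : Type*} [CommMonoid M] (d : σ →₀ ℕ) (f : σ → M) :
    (d.toMultiset.map f).prod = d.prod fun i k => f i ^ k := by
  rw [toMultiset_map, prod_toMultiset, prod_mapDomain_index pow_zero pow_add]

lemma Finsupp.card_map_toMultiset {σ α : Type*} (d : σ →₀ ℕ) (f : σ → α) :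
    Multiset.card (d.toMultiset.map f) = d.degree := by
  simp [degree_apply, Finsupp.sum]

namespace Polynomial

variable {R σ : Type*} [CommSemiring R] {L : σ → R[X]}

lemma natDegree_finsuppProd_pow_le (hL : ∀ i, (L i).natDegree ≤ 1) (d : σ →₀ ℕ) :
    (d.prod fun i k => L i ^ k).natDegree ≤ d.degree := by
  rw [← Finsupp.prod_map_toMultiset, ← Finsupp.card_map_toMultiset d L]
  refine (natDegree_multiset_prod_le _).trans ?_
  simpa using Multiset.sum_le_card_nsmul (d.toMultiset.map L |>.map natDegree) 1
    (by simpa using fun i _ => hL i)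

lemma coeff_finsuppProd_pow_degree (hL : ∀ i, (L i).natDegree ≤ 1) (d : σ →₀ ℕ) :
    (d.prod fun i k => L i ^ k).coeff d.degree = d.prod fun i k => (L i).coeff 1 ^ k := by
  rw [← Finsupp.prod_map_toMultiset, ← Finsupp.prod_map_toMultiset,
    ← Finsupp.card_map_toMultiset d L, ← mul_one (Multiset.card _),
    coeff_multiset_prod_of_natDegree_le _ _ (by simpa using fun i _ => hL i), Multiset.map_map]
  rfl

end Polynomial

namespace MvPolynomial

variable {R σ : Type*} [CommSemiring R] {φ : MvPolynomial σ R} {m : ℕ}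

lemma IsHomogeneous.degree_eq_of_mem_support (hφ : φ.IsHomogeneous m) {d : σ →₀ ℕ}
    (hd : d ∈ φ.support) : d.degree = m := by
  rw [Finsupp.degree_eq_weight_one]
  exact hφ (mem_support_iff.mp hd)

noncomputable def restrictLine (φ : MvPolynomial σ R) (x y : σ → R) : R[X] :=
  aeval (fun i => Polynomial.C (y i) * Polynomial.X + Polynomial.C (x i)) φ

lemma aeval_restrictLine {A : Type*} [CommSemiring A] [Algebra R A] (x y : σ → R) (t : A) :
    Polynomial.aeval t (φ.restrictLine x y) =
      eval (fun i => algebraMap R A (x i) + t * algebraMap R A (y i))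
        (map (algebraMap R A) φ) := by
  rw [restrictLine, comp_aeval_apply, eval_map, aeval_def]
  simp only [map_add, map_mul, Polynomial.aeval_C, Polynomial.aeval_X, add_comm, mul_comm]

lemma eval_restrictLine (x y : σ → R) (t : R) :
    (φ.restrictLine x y).eval t = eval (x + t • y) φ := by
  simpa [Pi.add_def, Pi.smul_def] using aeval_restrictLine (φ := φ) x y t

lemma restrictLine_eq_sum (x y : σ → R) : φ.restrictLine x y =
    ∑ d ∈ φ.support, Polynomial.C (φ.coeff d) *
      d.prod fun i k => (Polynomial.C (y i) * Polynomial.X + Polynomial.C (x i)) ^ k := by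
  conv_lhs => rw [restrictLine, φ.as_sum]
  simp only [map_sum, aeval_monomial, Polynomial.algebraMap_eq]

lemma IsHomogeneous.natDegree_restrictLine_le (hφ : φ.IsHomogeneous m) (x y : σ → R) :
    (φ.restrictLine x y).natDegree ≤ m := by
  rw [restrictLine_eq_sum]
  refine natDegree_sum_le_of_forall_le _ _ fun d hd => (natDegree_C_mul_le _ _).trans ?_
  rw [← hφ.degree_eq_of_mem_support hd]
  exact natDegree_finsuppProd_pow_le (fun _ => natDegree_linear_le) d

lemma IsHomogeneous.coeff_restrictLine (hφ : φ.IsHomogeneous m) (x y : σ → R) :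
    (φ.restrictLine x y).coeff m = eval y φ := by
  rw [restrictLine_eq_sum, finsetSum_coeff, eval_eq]
  refine Finset.sum_congr rfl fun d hd => ?_
  rw [Polynomial.coeff_C_mul, ← hφ.degree_eq_of_mem_support hd,
    coeff_finsuppProd_pow_degree (fun _ => natDegree_linear_le)]
  simp [Finsupp.prod]

lemma IsHomogeneous.eval_smul (hφ : φ.IsHomogeneous m) (c : R) (x : σ → R) :
    eval (c • x) φ = c ^ m * eval x φ := by
  rw [eval_eq, eval_eq, Finset.mul_sum]
  refine Finset.sum_congr rfl fun d hd => ?_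
  simp_rw [Pi.smul_apply, smul_eq_mul, mul_pow, Finset.prod_mul_distrib,
    Finset.prod_pow_eq_pow_sum]
  rw [← hφ.degree_eq_of_mem_support hd, Finsupp.degree_apply]
  ring

end MvPolynomial

section QuadraticExtension

variable {F E : Type*} [Field F] [Field E] [Algebra F E]

lemma exists_notMem_range_algebraMap (h : 1 < Module.finrank F E) :
    ∃ θ : E, θ ∉ (algebraMap F E).range := by
  by_contra! hsurj
  have : (⊥ : Subalgebra F E) = ⊤ := eq_top_iff.mpr fun e _ => hsurj e
  rw [Subalgebra.bot_eq_top_iff_finrank_eq_one] at this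
  omega

lemma exists_algebraMap_add_mul_eq (hdeg : Module.finrank F E = 2) {θ : E}
    (hθ : θ ∉ (algebraMap F E).range) (e : E) :
    ∃ a b : F, algebraMap F E a + θ * algebraMap F E b = e := by
  have hli : LinearIndependent F ![θ, 1] :=
    linearIndependent_fin2.mpr
      ⟨one_ne_zero, fun a h => hθ ⟨a, by simpa [Algebra.smul_def] using h⟩⟩
  have he : e ∈ Submodule.span F (Set.range ![θ, 1]) := by
    rw [hli.span_eq_top_of_card_eq_finrank (by simp [hdeg])]
    trivial
  obtain ⟨c, hc⟩ := (Submodule.mem_span_range_iff_exists_fun F).mp he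
  exact ⟨c 1, c 0, by simpa [Fin.sum_univ_two, Algebra.smul_def, mul_comm, add_comm] using hc⟩

lemma minpoly.natDegree_eq_two (hdeg : Module.finrank F E = 2) {θ : E}
    (hθ : θ ∉ (algebraMap F E).range) : (minpoly F θ).natDegree = 2 :=
  have : Module.Finite F E := Module.finite_of_finrank_eq_succ hdeg
  le_antisymm (hdeg ▸ minpoly.natDegree_le θ)
    ((minpoly.two_le_natDegree_iff (.of_finite F θ)).mpr hθ)

lemma MvPolynomial.IsHomogeneous.ne_zero_and_eval_eq_zero_of_eq_smul {σ : Type*}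
    {φ : MvPolynomial σ F} {m : ℕ} (hφ : φ.IsHomogeneous m) {z : σ → E} (hz0 : z ≠ 0)
    (hzφ : MvPolynomial.eval z (MvPolynomial.map (algebraMap F E) φ) = 0) {c : E} {w : σ → F}
    (hzw : z = c • (algebraMap F E ∘ w)) : w ≠ 0 ∧ MvPolynomial.eval w φ = 0 := by
  subst hzw
  have hc : c ≠ 0 := by rintro rfl; simp at hz0
  refine ⟨by rintro rfl; simp at hz0, ?_⟩
  rwa [(hφ.map _).eval_smul, ← MvPolynomial.map_eval, mul_eq_zero,
    or_iff_right (pow_ne_zero _ hc), map_eq_zero] at hzφ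

end QuadraticExtension

lemma minpoly.exists_isRoot_of_natDegree_eq_add_one {F A : Type*} [Field F] [Ring A]
    [Algebra F A] {θ : A} {p : F[X]} (hp : Polynomial.aeval θ p = 0)
    (hdeg : p.natDegree = (minpoly F θ).natDegree + 1) : ∃ t, p.IsRoot t := by
  obtain ⟨r, rfl⟩ := minpoly.dvd F θ hp
  have hq : minpoly F θ ≠ 0 := by rintro h; simp [h] at hdeg
  have hr : r ≠ 0 := by rintro rfl; simp at hdeg
  rw [natDegree_mul hq hr, add_right_inj] at hdeg
  obtain ⟨t, ht⟩ :=
    exists_root_of_degree_eq_one ((degree_eq_iff_natDegree_eq_of_pos one_pos).mpr hdeg)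
  exact ⟨t, by simp [ht.eq_zero]⟩

theorem cubic_form_quadratic_descent_general
    (F : Type*) [Field F]
    (E : Type*) [Field E] [Algebra F E]
    (hdeg : Module.finrank F E = 2)
    (n : ℕ) (C : MvPolynomial (Fin n) F) (hC : C.IsHomogeneous 3)
    (hzero : ∃ x : Fin n → E, x ≠ 0 ∧
      MvPolynomial.eval x (MvPolynomial.map (algebraMap F E) C) = 0) :
    ∃ x : Fin n → F, x ≠ 0 ∧ MvPolynomial.eval x C = 0 := by
  obtain ⟨z, hz0, hzC⟩ := hzero
  obtain ⟨θ, hθ⟩ := exists_notMem_range_algebraMap (F := F) (E := E) (by omega)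
  choose x y hxy using fun i => exists_algebraMap_add_mul_eq hdeg hθ (z i)
  have hz : z = fun i => algebraMap F E (x i) + θ * algebraMap F E (y i) :=
    funext fun i => (hxy i).symm
  by_cases hCy : MvPolynomial.eval y C = 0
  · by_cases hy : y = 0
    · exact ⟨x, hC.ne_zero_and_eval_eq_zero_of_eq_smul hz0 hzC (c := 1)
        (by ext; simp [hz, hy])⟩
    · exact ⟨y, hy, hCy⟩
  have hp : (C.restrictLine x y).natDegree = (minpoly F θ).natDegree + 1 := by
    rw [minpoly.natDegree_eq_two hdeg hθ, le_antisymm (hC.natDegree_restrictLine_le x y)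
      (le_natDegree_of_ne_zero (hC.coeff_restrictLine x y ▸ hCy))]
  obtain ⟨t, ht⟩ := minpoly.exists_isRoot_of_natDegree_eq_add_one
    (by rwa [MvPolynomial.aeval_restrictLine, ← hz]) hp
  refine ⟨x + t • y, fun hxty => hCy ?_, by rwa [← MvPolynomial.eval_restrictLine]⟩
  refine (hC.ne_zero_and_eval_eq_zero_of_eq_smul hz0 hzC (c := θ - algebraMap F E t) ?_).2
  ext i
  have hx : x i = -(t * y i) := eq_neg_of_add_eq_zero_left (by simpa using congrFun hxty i)
  simp [hz, hx]
  ring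

/-- A cubic form over a field of characteristic zero with a non-trivial zero
over a quadratic extension has a non-trivial zero over the base field. -/
theorem cubic_form_quadratic_descent
    (F : Type*) [Field F] [CharZero F]
    (E : Type*) [Field E] [Algebra F E] [FiniteDimensional F E]
    (hdeg : Module.finrank F E = 2)
    (n : ℕ) (C : MvPolynomial (Fin n) F) (hC : C.IsHomogeneous 3)
    (hzero : ∃ x : Fin n → E, x ≠ 0 ∧
      MvPolynomial.eval x (MvPolynomial.map (algebraMap F E) C) = 0) :
    ∃ x : Fin n → F, x ≠ 0 ∧ MvPolynomial.eval x C = 0 :=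
  cubic_form_quadratic_descent_general F E hdeg n C hC hzero
end

section
/- For every field K, u(K(x)) ≥ 2·u(K), where u denotes the u-invariant and K(x) is the rational function field in one variable over K. (Interpreted so that the inequality holds also when u(K) is infinite.) -/
/-!
Let `Q` be a form of degree `d ≥ 2` without nontrivial zero over `K`. Then `Q(y) + X Q(z)` has none
over `K(X)` either: after clearing denominators a zero `(y, z)` is polynomial, reducing modulo `X`
gives `Q(y(0)) = 0`, so `X ∣ y`; then `X^d Q(y / X) + X Q(z) = 0` forces `X ∣ z`, and `(y / X, z / X)`
is again a zero. So every power of `X` divides `y` and `z`, and they vanish. An anisotropic quadratic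
form in `m` variables over `K` thus yields one in `2m` variables over `K(X)`.
-/

/-- The u-invariant of a field: the least `n` (possibly `∞`) such that every
quadratic form in more than `n` variables has a non-trivial zero. -/
noncomputable def uInvariant (K : Type*) [Field K] : ℕ∞ :=
  sInf {n : ℕ∞ | ∀ m : ℕ, n < (m : ℕ∞) → ∀ Q : MvPolynomial (Fin m) K,
    Q.IsHomogeneous 2 → ∃ x : Fin m → K, x ≠ 0 ∧ MvPolynomial.eval x Q = 0}

open MvPolynomial
open scoped Polynomial

namespace Polynomial

theorem eq_zero_of_forall_X_pow_dvd {R : Type*} [Semiring R] {p : R[X]} (h : ∀ n, X ^ n ∣ p) :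
    p = 0 :=
  ext fun d => by simpa using X_pow_dvd_iff.mp (h (d + 1)) d d.lt_succ_self

end Polynomial

namespace MvPolynomial

variable {R σ τ : Type*}

def IsAnisotropic [CommSemiring R] (Q : MvPolynomial σ R) : Prop :=
  ∀ x : σ → R, eval x Q = 0 → x = 0

noncomputable def addScaledCopy [CommSemiring R] (Q : MvPolynomial σ R) (t : R) :
    MvPolynomial (σ ⊕ σ) R :=
  rename Sum.inl Q + C t * rename Sum.inr Q

section CommSemiring

variable [CommSemiring R] {Q : MvPolynomial σ R} {n : ℕ}

theorem not_isAnisotropic_iff : ¬Q.IsAnisotropic ↔ ∃ x : σ → R, x ≠ 0 ∧ eval x Q = 0 := by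
  simp [IsAnisotropic, and_comm]

theorem eval_addScaledCopy (t : R) (x : σ ⊕ σ → R) :
    eval x (Q.addScaledCopy t) = eval (x ∘ Sum.inl) Q + t * eval (x ∘ Sum.inr) Q := by
  simp [addScaledCopy, eval_rename]

theorem IsHomogeneous.addScaledCopy (hQ : Q.IsHomogeneous n) (t : R) :
    (Q.addScaledCopy t).IsHomogeneous n :=
  hQ.rename_isHomogeneous.add (hQ.rename_isHomogeneous.C_mul t)

theorem map_addScaledCopy {S : Type*} [CommSemiring S] (f : R →+* S) (t : R) :
    map f (Q.addScaledCopy t) = (map f Q).addScaledCopy (f t) := by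
  simp [addScaledCopy, map_rename]

theorem IsAnisotropic.rename_equiv (hQ : Q.IsAnisotropic) (e : σ ≃ τ) :
    (rename e Q).IsAnisotropic := by
  intro x hx
  rw [eval_rename] at hx
  funext j
  simpa using congrFun (hQ _ hx) (e.symm j)

theorem IsHomogeneous.aeval_smul {A : Type*} [CommSemiring A] [Algebra R A]
    (hQ : Q.IsHomogeneous n) (c : A) (x : σ → A) :
    MvPolynomial.aeval (c • x) Q = c ^ n * MvPolynomial.aeval x Q := by
  simp only [aeval_def, eval₂_eq, Finset.mul_sum]
  refine Finset.sum_congr rfl fun d hd => ?_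
  simp only [Pi.smul_apply, smul_eq_mul, mul_pow, Finset.prod_mul_distrib,
    Finset.prod_pow_eq_pow_sum, ← hQ.degree_eq_sum_deg_support hd]
  ring

end CommSemiring

section PolynomialDescent

variable [CommRing R] {Q : MvPolynomial σ R} {d : ℕ}

theorem coeff_zero_aeval (Q : MvPolynomial σ R) (y : σ → R[X]) :
    (aeval y Q).coeff 0 = eval (fun i => (y i).coeff 0) Q := by
  simp only [Polynomial.coeff_zero_eq_aeval_zero, comp_aeval_apply]
  rfl

theorem IsAnisotropic.exists_eq_X_smul (hQ : Q.IsAnisotropic) {y : σ → R[X]}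
    (h : Polynomial.X ∣ aeval y Q) : ∃ y' : σ → R[X], y = (Polynomial.X : R[X]) • y' := by
  rw [Polynomial.X_dvd_iff, coeff_zero_aeval] at h
  choose y' hy' using fun i => Polynomial.X_dvd_iff.mpr (congrFun (hQ _ h) i)
  exact ⟨y', _root_.funext hy'⟩

theorem IsAnisotropic.exists_X_smul_of_aeval_add_X_mul_aeval (hQ : Q.IsAnisotropic)
    (hhom : Q.IsHomogeneous d) (hd : 2 ≤ d) {y z : σ → R[X]}
    (h : aeval y Q + Polynomial.X * aeval z Q = 0) :
    ∃ y' z' : σ → R[X], y = (Polynomial.X : R[X]) • y' ∧ z = (Polynomial.X : R[X]) • z' ∧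
      aeval y' Q + Polynomial.X * aeval z' Q = 0 := by
  obtain ⟨k, rfl⟩ := Nat.exists_eq_add_of_le' hd
  obtain ⟨y', rfl⟩ := hQ.exists_eq_X_smul
    ((dvd_add_left (dvd_mul_right _ _)).mp (h ▸ dvd_zero _))
  rw [hhom.aeval_smul] at h
  have hz : (Polynomial.X : R[X]) ^ (k + 1) * aeval y' Q + aeval z Q = 0 :=
    Polynomial.isRegular_X.left.mul_left_eq_zero_iff.mp (by linear_combination h)
  obtain ⟨z', rfl⟩ := hQ.exists_eq_X_smul (y := z) ⟨-(Polynomial.X ^ k * aeval y' Q), by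
    linear_combination hz⟩
  rw [hhom.aeval_smul] at h
  exact ⟨y', z', rfl, rfl,
    (Polynomial.isRegular_X_pow (k + 2)).left.mul_left_eq_zero_iff.mp (by linear_combination h)⟩

theorem IsAnisotropic.X_pow_dvd_of_aeval_add_X_mul_aeval (hQ : Q.IsAnisotropic)
    (hhom : Q.IsHomogeneous d) (hd : 2 ≤ d) (n : ℕ) {y z : σ → R[X]}
    (h : aeval y Q + Polynomial.X * aeval z Q = 0) (i : σ) :
    Polynomial.X ^ n ∣ y i ∧ Polynomial.X ^ n ∣ z i := by
  induction n generalizing y z with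
  | zero => simp
  | succ n ih =>
    obtain ⟨y', z', rfl, rfl, h'⟩ := hQ.exists_X_smul_of_aeval_add_X_mul_aeval hhom hd h
    simp only [Pi.smul_apply, smul_eq_mul, pow_succ']
    exact (ih h').imp (mul_dvd_mul_left _) (mul_dvd_mul_left _)

theorem IsAnisotropic.addScaledCopy_X (hQ : Q.IsAnisotropic) (hhom : Q.IsHomogeneous d)
    (hd : 2 ≤ d) : ((map (algebraMap R R[X]) Q).addScaledCopy Polynomial.X).IsAnisotropic := by
  intro x hx
  rw [eval_addScaledCopy, eval_map, eval_map, ← aeval_def, ← aeval_def] at hx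
  have hdvd n i := hQ.X_pow_dvd_of_aeval_add_X_mul_aeval hhom hd n hx i
  ext1 (i | i)
  · exact Polynomial.eq_zero_of_forall_X_pow_dvd fun n => (hdvd n i).1
  · exact Polynomial.eq_zero_of_forall_X_pow_dvd fun n => (hdvd n i).2

end PolynomialDescent

theorem IsAnisotropic.map_of_isFractionRing {A F : Type*} [CommRing A] [CommRing F]
    [Algebra A F] [IsFractionRing A F] [Finite σ] {P : MvPolynomial σ A} {n : ℕ}
    (hP : P.IsAnisotropic) (hhom : P.IsHomogeneous n) :
    (map (algebraMap A F) P).IsAnisotropic := by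
  intro x hx
  rw [eval_map, ← aeval_def] at hx
  obtain ⟨b, hb⟩ := IsLocalization.exist_integer_multiples_of_finite (nonZeroDivisors A) x
  choose y hy using hb
  have hyx : algebraMap A F ∘ y = algebraMap A F b • x := by
    ext i
    simp [hy, Algebra.smul_def]
  have hy0 : y = 0 := hP y <| IsFractionRing.injective A F <| by
    rw [map_zero, ← aeval_eq_eval, ← aeval_algebraMap_apply, hyx, hhom.aeval_smul, hx, mul_zero]
  ext i
  have := hy i
  rw [hy0, Pi.zero_apply, map_zero, Algebra.smul_def] at this
  exact ((IsLocalization.map_units F b).mul_right_eq_zero).mp this.symm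

theorem IsAnisotropic.addScaledCopy_ratFunc_X {K : Type*} [CommRing K] [IsDomain K] [Finite σ]
    {Q : MvPolynomial σ K} {d : ℕ} (hQ : Q.IsAnisotropic) (hhom : Q.IsHomogeneous d)
    (hd : 2 ≤ d) :
    ((map (algebraMap K (RatFunc K)) Q).addScaledCopy RatFunc.X).IsAnisotropic := by
  have h := (hQ.addScaledCopy_X hhom hd).map_of_isFractionRing (F := RatFunc K)
    ((hhom.map _).addScaledCopy _)
  rwa [map_addScaledCopy, map_map, ← IsScalarTower.algebraMap_eq, RatFunc.algebraMap_X] at h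

end MvPolynomial

/-- `u(K(x)) ≥ 2 u(K)` for every field `K`. -/
theorem uInvariant_ratFunc_ge (K : Type*) [Field K] :
    2 * uInvariant K ≤ uInvariant (RatFunc K) := by
  refine le_sInf fun n hn => ?_
  induction n using ENat.recTopCoe with
  | top => exact le_top
  | coe N =>
    have hK : uInvariant K ≤ (N / 2 : ℕ) := by
      refine sInf_le fun m hm Q hQ => not_isAnisotropic_iff.mp fun hanis => ?_
      have h2m : (N : ℕ∞) < (2 * m : ℕ) := by
        norm_cast at hm ⊢
        omega
      let e : Fin m ⊕ Fin m ≃ Fin (2 * m) := finSumFinEquiv.trans (finCongr (two_mul m).symm)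
      let Q₂ := (map (algebraMap K (RatFunc K)) Q).addScaledCopy RatFunc.X
      obtain ⟨x, hx0, hx⟩ := hn (2 * m) h2m (rename e Q₂)
        ((hQ.map _).addScaledCopy _).rename_isHomogeneous
      have hQ₂ : Q₂.IsAnisotropic :=
        hanis.addScaledCopy_ratFunc_X hQ le_rfl
      exact hx0 (hQ₂.rename_equiv e x hx)
    calc 2 * uInvariant K ≤ 2 * (N / 2 : ℕ) := by gcongr
      _ ≤ N := by exact_mod_cast Nat.mul_div_le N 2
end
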